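/- arXiv:1901.07090 — 2 statements merged into one kernel-verified Lean document; each statement's English description precedes it below -/
import Mathlib

section
/- Modularity reduction: choosing η_j(u) = 1 on (u_{j-1}, u_j] (unnormalized indicators, so ∫η_j = ∫η_j² = p(j)) in the spectral estimating equation yields the generalized eigenvalue problem B Θ = D_p Θ Λ where B(j,k) = P(j,k) − p(j)p(k) and D_p = diag(p(1),...,p(n)); equivalently, in terms of the adjacency matrix, (A − ddᵀ/N) Θ = D Θ Λ after scaling by N. -/
open Finset Matrix

/-- modularity reduction. The estimating system
`Σ_j θ_{jk}[P(j,l) − p(j)p(l) − λ_k δ_{jl} p(l)] = 0` (for all `l,k`) is equivalent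
to the generalized eigenvalue problem `B Θ = D_p Θ Λ` with `B(j,k) = P(j,k) − p(j)p(k)`;
and in terms of the adjacency matrix `A = N·P`, this is in turn equivalent to
`(A − ddᵀ/N) Θ = D Θ Λ`. -/
theorem modularity_reduction
    (n : ℕ) (hn : 1 ≤ n)
    (P : Matrix (Fin n) (Fin n) ℝ)
    (hP_nonneg : ∀ j l, 0 ≤ P j l) (hP_symm : P.IsSymm)
    (hP_sum : ∑ j, ∑ l, P j l = 1)
    (p : Fin n → ℝ) (hp : ∀ j, p j = ∑ l, P j l) (hp_pos : ∀ j, 0 < p j)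
    (N : ℝ) (hNpos : 0 < N)
    (A : Matrix (Fin n) (Fin n) ℝ) (hA : ∀ j k, A j k = N * P j k)
    (d : Fin n → ℝ) (hd : ∀ j, d j = ∑ k, A j k)
    (B : Matrix (Fin n) (Fin n) ℝ) (hB : ∀ j k, B j k = P j k - p j * p k)
    (Θ : Matrix (Fin n) (Fin n) ℝ) (lam : Fin n → ℝ) :
    ((∀ k l, ∑ j, Θ j k *
        (P j l - p j * p l - (if j = l then lam k * p l else 0)) = 0)
      ↔ B * Θ = Matrix.diagonal p * Θ * Matrix.diagonal lam) ∧
    (B * Θ = Matrix.diagonal p * Θ * Matrix.diagonal lam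
      ↔ (A - (1 / N) • Matrix.vecMulVec d d) * Θ
          = Matrix.diagonal d * Θ * Matrix.diagonal lam) := by

  have hNe : N ≠ 0 := ne_of_gt hNpos
  have hdp : ∀ j, d j = N * p j := by
    intro j
    simp [hd, hA, hp, Finset.mul_sum]
  have hBsymm : ∀ j l, B l j = B j l := by
    intro j l
    have : P l j = P j l := by
      have := congrFun (congrFun hP_symm l) j
      simpa [Matrix.transpose_apply] using this.symm
    rw [hB, hB, this, mul_comm]
  have key : ∀ k l, (∑ j, Θ j k *
      (P j l - p j * p l - (if j = l then lam k * p l else 0)))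
      = (B * Θ) l k - (Matrix.diagonal p * Θ * Matrix.diagonal lam) l k := by
    intro k l
    have h1 : (B * Θ) l k = ∑ j, Θ j k * B j l := by
      rw [Matrix.mul_apply]
      refine Finset.sum_congr rfl fun j _ => ?_
      rw [hBsymm j l, mul_comm]
    have h2 : (Matrix.diagonal p * Θ * Matrix.diagonal lam) l k
        = p l * Θ l k * lam k := by
      rw [Matrix.mul_diagonal, Matrix.diagonal_mul]
    rw [h1, h2]
    have h3 : (∑ j, Θ j k * (if j = l then lam k * p l else 0))
        = Θ l k * (lam k * p l) := by
      rw [Finset.sum_eq_single l]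
      · simp
      · intro j _ hj; simp [hj]
      · intro h; exact absurd (Finset.mem_univ l) h
    have h4 : ∀ j, Θ j k * (P j l - p j * p l - (if j = l then lam k * p l else 0))
        = Θ j k * B j l - Θ j k * (if j = l then lam k * p l else 0) := by
      intro j; rw [hB]; ring
    rw [Finset.sum_congr rfl (fun j _ => h4 j), Finset.sum_sub_distrib, h3]
    ring
  constructor
  · constructor
    · intro h
      ext l k
      have := key k l
      rw [h k l] at this
      linarith [this]
    · intro h k l
      rw [key k l, h]
      ring
  · have hA' : (A - (1 / N) • Matrix.vecMulVec d d) = N • B := by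
      ext j k
      simp only [Matrix.sub_apply, Matrix.smul_apply, Matrix.vecMulVec_apply,
        smul_eq_mul, hA, hB, hdp]
      field_simp
    have hD : Matrix.diagonal d = N • Matrix.diagonal p := by
      ext j k
      by_cases h : j = k <;> simp [Matrix.diagonal, h, hdp]
    rw [hA', hD]
    constructor
    · intro h
      rw [Matrix.smul_mul, Matrix.smul_mul, Matrix.smul_mul, h]
    · intro h
      have h' : N • (B * Θ) = N • (Matrix.diagonal p * Θ * Matrix.diagonal lam) := by
        rw [← Matrix.smul_mul, h, Matrix.smul_mul, Matrix.smul_mul]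
      exact smul_right_injective _ hNe h'
end

section
/- The LP basis function T_1 is standardized: for a discrete random variable X with pmf p(x) > 0, the function T_1(x) = √12 (F^{mid}(x) − 1/2)/√(1 − Σ_x p(x)³), where F^{mid}(x) = F(x) − p(x)/2, satisfies Σ_x T_1(x) p(x) = 0 and Σ_x T_1²(x) p(x) = 1. -/
open Finset

/-- the first LP basis function
`T₁(x) = √12 (F^mid(x) − 1/2)/√(1 − Σ p³)`, with `F^mid(x) = F(x) − p(x)/2`, has
mean 0 and second moment 1 under `p`. The support points `x_1 < ⋯ < x_n` are
represented by the ordered index set `Fin n`. -/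
theorem lp_basis_T1_standardized
    (n : ℕ) (hn : 2 ≤ n)
    (p : Fin n → ℝ) (hp_pos : ∀ i, 0 < p i) (hp_sum : ∑ i, p i = 1)
    (F : Fin n → ℝ) (hF : ∀ i, F i = ∑ j ∈ Finset.Iic i, p j)
    (Fmid : Fin n → ℝ) (hFmid : ∀ i, Fmid i = F i - p i / 2)
    (T1 : Fin n → ℝ)
    (hT1 : ∀ i, T1 i = Real.sqrt 12 * (Fmid i - 1 / 2)
        / Real.sqrt (1 - ∑ i, (p i) ^ 3)) :
    (∑ i, T1 i * p i = 0) ∧ (∑ i, (T1 i) ^ 2 * p i = 1) := by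
  classical
  set q : ℕ → ℝ := fun k => if h : k < n then p ⟨k, h⟩ else 0 with hq
  set C : ℕ → ℝ := fun k => ∑ j ∈ Finset.range k, q j with hC
  have hCF : ∀ i : Fin n, C ((i : ℕ) + 1) = F i := by
    intro i
    rw [hF]
    have h1 : Finset.range ((i : ℕ) + 1) = Finset.Iic (i : ℕ) := by
      ext k; simp [Nat.lt_succ_iff]
    have h2 : Finset.Iic (i : ℕ) = (Finset.Iic i).map Fin.valEmbedding :=
      (Fin.map_valEmbedding_Iic i).symm
    show (∑ j ∈ Finset.range ((i : ℕ) + 1), q j) = _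
    rw [h1, h2, Finset.sum_map]
    apply Finset.sum_congr rfl
    intro j _
    simp [hq, Fin.valEmbedding, j.2]
  have hqp : ∀ i : Fin n, q (i : ℕ) = p i := by
    intro i; simp [hq, i.2]
  have hCstep : ∀ i : Fin n, C ((i : ℕ) + 1) - C (i : ℕ) = p i := by
    intro i
    show (∑ j ∈ Finset.range ((i : ℕ) + 1), q j) - (∑ j ∈ Finset.range (i : ℕ), q j) = p i
    rw [Finset.sum_range_succ, hqp]; ring
  have hCn : C n = 1 := by
    have : C n = ∑ i : Fin n, p i := by
      show (∑ j ∈ Finset.range n, q j) = _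
      rw [← Fin.sum_univ_eq_sum_range q n]
      exact Finset.sum_congr rfl fun i _ => hqp i
    rw [this, hp_sum]
  have hC0 : C 0 = 0 := by
    show (∑ j ∈ Finset.range 0, q j) = 0
    simp
  -- first moment of Fmid
  have hM1 : ∑ i : Fin n, p i * Fmid i = 1 / 2 := by
    have key : ∀ i : Fin n, p i * Fmid i
        = (C ((i : ℕ) + 1) ^ 2 - C (i : ℕ) ^ 2) / 2 := by
      intro i
      rw [hFmid, ← hCF i, ← hCstep i]
      ring
    rw [Finset.sum_congr rfl fun i _ => key i]
    rw [Fin.sum_univ_eq_sum_range (fun k => (C (k + 1) ^ 2 - C k ^ 2) / 2) n]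
    rw [← Finset.sum_div, Finset.sum_range_sub (fun k => C k ^ 2)]
    rw [hCn, hC0]; norm_num
  -- second moment of Fmid
  have hM2 : ∑ i : Fin n, p i * (Fmid i ^ 2 + p i ^ 2 / 12) = 1 / 3 := by
    have key : ∀ i : Fin n, p i * (Fmid i ^ 2 + p i ^ 2 / 12)
        = (C ((i : ℕ) + 1) ^ 3 - C (i : ℕ) ^ 3) / 3 := by
      intro i
      rw [hFmid, ← hCF i, ← hCstep i]
      ring
    rw [Finset.sum_congr rfl fun i _ => key i]
    rw [Fin.sum_univ_eq_sum_range (fun k => (C (k + 1) ^ 3 - C k ^ 3) / 3) n]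
    rw [← Finset.sum_div, Finset.sum_range_sub (fun k => C k ^ 3)]
    rw [hCn, hC0]; norm_num
  set S : ℝ := ∑ i, (p i) ^ 3 with hSdef
  have hFm2 : ∑ i : Fin n, p i * Fmid i ^ 2 = 1 / 3 - S / 12 := by
    have expand : ∑ i : Fin n, p i * (Fmid i ^ 2 + p i ^ 2 / 12)
        = ∑ i : Fin n, (p i * Fmid i ^ 2 + p i ^ 3 / 12) :=
      Finset.sum_congr rfl fun i _ => by ring
    rw [expand, Finset.sum_add_distrib, ← Finset.sum_div, ← hSdef] at hM2
    linarith
  -- positivity of 1 - S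
  have hplt1 : ∀ i : Fin n, p i < 1 := by
    intro i
    obtain ⟨j, hj⟩ := Fintype.exists_ne_of_one_lt_card
      (by simp [Fintype.card_fin]; omega : 1 < Fintype.card (Fin n)) i
    have h1 : p i + p j ≤ ∑ k, p k := by
      rw [← Finset.add_sum_erase Finset.univ p (Finset.mem_univ i)]
      have hj' : j ∈ Finset.univ.erase i := Finset.mem_erase.mpr ⟨hj, Finset.mem_univ j⟩
      have := Finset.single_le_sum (f := p) (fun k _ => (hp_pos k).le) hj'
      linarith
    rw [hp_sum] at h1
    have := hp_pos j
    linarith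
  have hS1 : S < 1 := by
    have key : ∀ i : Fin n, (p i) ^ 3 < p i := by
      intro i
      have h1 := hp_pos i
      have h2 := hplt1 i
      nlinarith [mul_pos h1 (show (0:ℝ) < 1 - p i ^ 2 by nlinarith)]
    calc S < ∑ i, p i := Finset.sum_lt_sum_of_nonempty
            (Finset.univ_nonempty_iff.mpr (Fin.pos_iff_nonempty.mp (by omega)))
            (fun i _ => key i)
      _ = 1 := hp_sum
  have hpos : (0 : ℝ) < 1 - S := by linarith
  set c : ℝ := Real.sqrt 12 / Real.sqrt (1 - S) with hc
  have hT1' : ∀ i, T1 i = c * (Fmid i - 1 / 2) := by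
    intro i; rw [hT1, hc]; ring
  have e1 : ∑ i : Fin n, (Fmid i - 1/2) * p i = 0 := by
    have : ∑ i : Fin n, (Fmid i - 1/2) * p i
        = ∑ i : Fin n, p i * Fmid i - ∑ i : Fin n, (1/2 : ℝ) * p i := by
      rw [← Finset.sum_sub_distrib]
      exact Finset.sum_congr rfl fun i _ => by ring
    rw [this, ← Finset.mul_sum, hM1, hp_sum]; norm_num
  constructor
  · calc ∑ i, T1 i * p i = ∑ i : Fin n, c * ((Fmid i - 1/2) * p i) :=
          Finset.sum_congr rfl fun i _ => by rw [hT1' i]; ring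
    _ = c * ∑ i : Fin n, (Fmid i - 1/2) * p i := (Finset.mul_sum _ _ _).symm
    _ = 0 := by rw [e1]; ring
  · have hc2 : c ^ 2 = 12 / (1 - S) := by
      rw [hc, div_pow, Real.sq_sqrt (by norm_num : (0:ℝ) ≤ 12), Real.sq_sqrt hpos.le]
    have hvar : ∑ i : Fin n, (Fmid i - 1/2) ^ 2 * p i = (1 - S) / 12 := by
      have : ∑ i : Fin n, (Fmid i - 1/2) ^ 2 * p i
          = ∑ i : Fin n, p i * Fmid i ^ 2 - ∑ i : Fin n, p i * Fmid i
            + ∑ i : Fin n, (1/4 : ℝ) * p i := by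
        rw [← Finset.sum_sub_distrib, ← Finset.sum_add_distrib]
        exact Finset.sum_congr rfl fun i _ => by ring
      rw [this, hFm2, hM1, ← Finset.mul_sum, hp_sum]
      ring
    calc ∑ i, (T1 i) ^ 2 * p i = ∑ i : Fin n, c ^ 2 * ((Fmid i - 1/2) ^ 2 * p i) :=
          Finset.sum_congr rfl fun i _ => by rw [hT1' i]; ring
    _ = c ^ 2 * ∑ i : Fin n, (Fmid i - 1/2) ^ 2 * p i := (Finset.mul_sum _ _ _).symm
    _ = 1 := by
          rw [hvar, hc2]
          field_simp
end
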